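/- arXiv:2512.09678 — 2 statements merged into one kernel-verified Lean document; each statement's English description precedes it below -/
import Mathlib

section
/- Let ‖·‖₍₁₎ and ‖·‖₍₂₎ be two norms on a finite-dimensional real inner product space, and let α₁, α₂ > 0. Define ‖x‖ = α₁‖x‖₍₁₎ + α₂‖x‖₍₂₎. Then the unit ball of the dual norm of ‖·‖ equals the Minkowski sum α₁·B₁* + α₂·B₂*, where Bᵢ* is the unit ball of the dual norm of ‖·‖₍ᵢ₎. -/
open scoped Pointwise

def IsNorm {V : Type*} [AddCommGroup V] [Module ℝ V] (n : V → ℝ) : Prop :=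
  (∀ x y, n (x + y) ≤ n x + n y) ∧ (∀ (a : ℝ) (x : V), n (a • x) = |a| * n x) ∧
    ∀ x, n x = 0 → x = 0

noncomputable def dualNorm {V : Type*} [NormedAddCommGroup V] [InnerProductSpace ℝ V]
    (n : V → ℝ) (y : V) : ℝ :=
  sSup {r : ℝ | ∃ x, n x ≤ 1 ∧ r = (inner ℝ y x : ℝ)}

/-!
The dual unit ball of a norm `n` is the set of `y` with `⟪y, x⟫ ≤ n x` for all `x`; scaling the
norm by `α > 0` scales this set by `α`. So it suffices to show that if `⟪y, ·⟫ ≤ p + q` for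
sublinear `p`, `q`, then `y = y₁ + y₂` with `⟪yᵢ, ·⟫` dominated by `p` resp. `q`. This is
Hahn–Banach on `V × V`: extend `(x, x) ↦ ⟪y, x⟫` from the diagonal to a linear functional `g`
dominated by `(x₁, x₂) ↦ p x₁ + q x₂`, and take `yᵢ` representing the two halves of `g`.
Finite dimensionality makes every norm comparable to the Euclidean one, so that the supremum
defining the dual norm is over a bounded set.
-/

open scoped InnerProductSpace

namespace IsNorm

section Algebraic

variable {V : Type*} [AddCommGroup V] [Module ℝ V] {n p q : V → ℝ}

def toSeminorm (h : IsNorm n) : Seminorm ℝ V :=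
  Seminorm.of n h.1 fun a x => by rw [h.2.1, Real.norm_eq_abs]

lemma nonneg (h : IsNorm n) (x : V) : 0 ≤ n x :=
  apply_nonneg h.toSeminorm x

lemma smul_of_nonneg (h : IsNorm n) {c : ℝ} (hc : 0 ≤ c) (x : V) : n (c • x) = c * n x := by
  rw [h.2.1, abs_of_nonneg hc]

lemma const_mul (h : IsNorm n) {α : ℝ} (hα : 0 < α) : IsNorm fun x => α * n x := by
  refine ⟨fun x y => ?_, fun a x => ?_, fun x hx => h.2.2 x ?_⟩
  · nlinarith [h.1 x y]
  · simp only [h.2.1]; ring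
  · simpa [hα.ne'] using hx

lemma add (hp : IsNorm p) (hq : IsNorm q) : IsNorm fun x => p x + q x := by
  refine ⟨fun x y => ?_, fun a x => ?_, fun x hx => hp.2.2 x ?_⟩
  · linarith [hp.1 x y, hq.1 x y]
  · simp only [hp.2.1, hq.2.1]; ring
  · linarith [hp.nonneg x, hq.nonneg x]

end Algebraic

section FiniteDimensional

variable {V : Type*} [NormedAddCommGroup V] [NormedSpace ℝ V] [FiniteDimensional ℝ V] {n : V → ℝ}

lemma continuous (h : IsNorm n) : Continuous n :=
  continuousOn_univ.mp (h.toSeminorm.convexOn.continuousOn isOpen_univ)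

/-- `1 / n` is continuous, hence bounded, on the compact unit sphere. -/
lemma exists_norm_le_mul (h : IsNorm n) : ∃ C, ∀ x, ‖x‖ ≤ C * n x := by
  have hpos : ∀ u ∈ Metric.sphere (0 : V) 1, n u ≠ 0 := fun u hu hnu =>
    by simp [h.2.2 u hnu] at hu
  obtain ⟨C, hC⟩ := (isCompact_sphere (0 : V) 1).exists_bound_of_continuousOn
    (h.continuous.continuousOn.inv₀ hpos)
  refine ⟨C, fun x => ?_⟩
  rcases eq_or_ne x 0 with rfl | hx
  · simp [show n 0 = 0 by simpa using h.2.1 0 0]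
  have hx' : 0 < ‖x‖ := norm_pos_iff.mpr hx
  have hnx : 0 < n x := (h.nonneg x).lt_of_ne' fun h0 => hx (h.2.2 x h0)
  have hu := hC (‖x‖⁻¹ • x) (by simp [norm_smul, hx'.ne'])
  rw [Pi.inv_apply, h.smul_of_nonneg (inv_nonneg.mpr hx'.le), mul_inv, inv_inv, norm_mul,
    Real.norm_of_nonneg hx'.le, norm_inv, Real.norm_of_nonneg hnx.le, ← div_eq_mul_inv,
    div_le_iff₀ hnx] at hu
  exact hu

end FiniteDimensional

end IsNorm

/-- Hahn–Banach for the sublinear function `(x₁, x₂) ↦ p x₁ + q x₂` on `E × E`, extending `f`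
from the diagonal. -/
theorem LinearMap.exists_add_eq_of_le_add {E : Type*} [AddCommGroup E] [Module ℝ E]
    {p q : E → ℝ} (hp_hom : ∀ c : ℝ, 0 < c → ∀ x, p (c • x) = c * p x)
    (hp_add : ∀ x y, p (x + y) ≤ p x + p y) (hq_hom : ∀ c : ℝ, 0 < c → ∀ x, q (c • x) = c * q x)
    (hq_add : ∀ x y, q (x + y) ≤ q x + q y) (f : E →ₗ[ℝ] ℝ) (hf : ∀ x, f x ≤ p x + q x) :
    ∃ g₁ g₂ : E →ₗ[ℝ] ℝ, g₁ + g₂ = f ∧ (∀ x, g₁ x ≤ p x) ∧ ∀ x, g₂ x ≤ q x := by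
  have hp0 : p 0 = 0 := by linarith [show p 0 = 2 * p 0 by simpa using hp_hom 2 two_pos 0]
  have hq0 : q 0 = 0 := by linarith [show q 0 = 2 * q 0 by simpa using hq_hom 2 two_pos 0]
  let diagonal := LinearMap.eqLocus (LinearMap.fst ℝ E E) (LinearMap.snd ℝ E E)
  obtain ⟨g, hgf, hg⟩ := exists_extension_of_le_sublinear
    ⟨diagonal, (f ∘ₗ LinearMap.fst ℝ E E).domRestrict diagonal⟩ (fun z => p z.1 + q z.2)
    (fun c hc z => by simp only [Prod.smul_fst, Prod.smul_snd, hp_hom c hc, hq_hom c hc]; ring)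
    (fun z w => by
      simp only [Prod.fst_add, Prod.snd_add]
      linarith [hp_add z.1 w.1, hq_add z.2 w.2])
    (fun z => by
      obtain ⟨⟨x₁, x₂⟩, hz : x₁ = x₂⟩ := z
      subst hz
      exact hf x₁)
  refine ⟨g ∘ₗ LinearMap.inl ℝ E E, g ∘ₗ LinearMap.inr ℝ E E, ?_, fun x => ?_, fun x => ?_⟩
  · ext x
    simpa [← map_add] using hgf ⟨(x, x), rfl⟩
  · simpa [hq0] using hg (x, 0)
  · simpa [hp0] using hg (0, x)

section DualBall

variable {V : Type*} [NormedAddCommGroup V] [InnerProductSpace ℝ V]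

def dualBall (p : V → ℝ) : Set V :=
  {y | ∀ x, ⟪y, x⟫_ℝ ≤ p x}

lemma IsNorm.setOf_dualNorm_le_one [FiniteDimensional ℝ V] {n : V → ℝ} (h : IsNorm n) :
    {y | dualNorm n y ≤ 1} = dualBall n := by
  ext y
  refine ⟨fun hy x => ?_, fun hy => Real.sSup_le ?_ zero_le_one⟩
  · -- `sSup` of an unbounded set is `0`, so `dualNorm n y ≤ 1` alone says nothing without this.
    have hbdd : BddAbove {r : ℝ | ∃ x, n x ≤ 1 ∧ r = ⟪y, x⟫_ℝ} := by
      obtain ⟨C, hC⟩ := h.exists_norm_le_mul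
      refine ⟨‖y‖ * |C|, ?_⟩
      rintro _ ⟨x, hx, rfl⟩
      have hxC : ‖x‖ ≤ |C| := calc
        ‖x‖ ≤ C * n x := hC x
        _ ≤ |C| * n x := by gcongr; exacts [h.nonneg x, le_abs_self C]
        _ ≤ |C| := mul_le_of_le_one_right (abs_nonneg C) hx
      exact (real_inner_le_norm y x).trans (by gcongr)
    rcases (h.nonneg x).eq_or_lt with hx | hx
    · simpa [h.2.2 x hx.symm] using h.nonneg 0
    have hunit : n ((n x)⁻¹ • x) ≤ 1 := by
      rw [h.smul_of_nonneg (inv_nonneg.mpr hx.le), inv_mul_cancel₀ hx.ne']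
    have := (le_csSup hbdd ⟨_, hunit, rfl⟩).trans hy
    rwa [real_inner_smul_right, inv_mul_le_iff₀ hx, mul_one] at this
  · rintro _ ⟨x, hx, rfl⟩
    exact (hy x).trans hx

lemma smul_dualBall {α : ℝ} (hα : 0 < α) (p : V → ℝ) :
    α • dualBall p = dualBall fun x => α * p x := by
  ext y
  simp only [Set.mem_smul_set_iff_inv_smul_mem₀ hα.ne', dualBall, Set.mem_ofPred_eq,
    real_inner_smul_left, inv_mul_le_iff₀ hα]

lemma dualBall_add [FiniteDimensional ℝ V] {p q : V → ℝ}
    (hp_hom : ∀ c : ℝ, 0 < c → ∀ x, p (c • x) = c * p x) (hp_add : ∀ x y, p (x + y) ≤ p x + p y)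
    (hq_hom : ∀ c : ℝ, 0 < c → ∀ x, q (c • x) = c * q x) (hq_add : ∀ x y, q (x + y) ≤ q x + q y) :
    dualBall (fun x => p x + q x) = dualBall p + dualBall q := by
  ext y
  refine ⟨fun hy => ?_, ?_⟩
  · obtain ⟨g₁, g₂, hg, hg₁, hg₂⟩ :=
      LinearMap.exists_add_eq_of_le_add hp_hom hp_add hq_hom hq_add (innerₗ V y) hy
    obtain ⟨y₁, hy₁⟩ := (InnerProductSpace.toDual ℝ V).surjective g₁.toContinuousLinearMap
    have hy₁x (x : V) : ⟪y₁, x⟫_ℝ = g₁ x := congr($hy₁ x)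
    refine ⟨y₁, fun x => hy₁x x ▸ hg₁ x, y - y₁, fun x => ?_, add_sub_cancel y₁ y⟩
    have hy₂x : ⟪y - y₁, x⟫_ℝ = g₂ x := by
      rw [inner_sub_left, hy₁x, ← innerₗ_apply_apply, ← hg, LinearMap.add_apply,
        add_sub_cancel_left]
    exact hy₂x ▸ hg₂ x
  · rintro ⟨y₁, hy₁, y₂, hy₂, rfl⟩ x
    rw [inner_add_left]
    exact add_le_add (hy₁ x) (hy₂ x)

end DualBall

/-- The dual unit ball of α₁‖·‖₍₁₎ + α₂‖·‖₍₂₎ is the Minkowski sum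
α₁·B₁* + α₂·B₂* of the scaled dual unit balls. -/
theorem stmt2 {V : Type*} [NormedAddCommGroup V] [InnerProductSpace ℝ V]
    [FiniteDimensional ℝ V] (n₁ n₂ : V → ℝ) (h₁ : IsNorm n₁) (h₂ : IsNorm n₂)
    (α₁ α₂ : ℝ) (hα₁ : 0 < α₁) (hα₂ : 0 < α₂) :
    {y : V | dualNorm (fun x => α₁ * n₁ x + α₂ * n₂ x) y ≤ 1}
      = α₁ • {y : V | dualNorm n₁ y ≤ 1} + α₂ • {y : V | dualNorm n₂ y ≤ 1} := by
  have hp := h₁.const_mul hα₁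
  have hq := h₂.const_mul hα₂
  have hpq : IsNorm fun x => α₁ * n₁ x + α₂ * n₂ x := hp.add hq
  rw [hpq.setOf_dualNorm_le_one, h₁.setOf_dualNorm_le_one, h₂.setOf_dualNorm_le_one,
    smul_dualBall hα₁, smul_dualBall hα₂]
  exact dualBall_add (fun c hc => hp.smul_of_nonneg hc.le) hp.1
    (fun c hc => hq.smul_of_nonneg hc.le) hq.1
end

section
/- For any real m×n matrix M and any integer 1 ≤ k ≤ min(m,n), the norm dual to the Ky Fan k-norm satisfies ‖M‖_{KF-k}† = max{(1/k)‖M‖_nuc, ‖M‖_op}, where ‖M‖_nuc is the nuclear norm and ‖M‖_op is the operator (spectral) norm. -/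
open Matrix


noncomputable def singularValues {m n : ℕ} (A : Matrix (Fin m) (Fin n) ℝ) : Fin n → ℝ :=
  fun i => Real.sqrt ((Matrix.isHermitian_conjTranspose_mul_self A).eigenvalues i)

def finner {m n : ℕ} (A B : Matrix (Fin m) (Fin n) ℝ) : ℝ := ∑ i, ∑ j, A i j * B i j

noncomputable def nuclearNorm {m n : ℕ} (A : Matrix (Fin m) (Fin n) ℝ) : ℝ :=
  ∑ i, singularValues A i

noncomputable def opNorm {m n : ℕ} (A : Matrix (Fin m) (Fin n) ℝ) : ℝ :=
  sSup (Set.range (singularValues A))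

noncomputable def kyFan {m n : ℕ} (k : ℕ) (A : Matrix (Fin m) (Fin n) ℝ) : ℝ :=
  sSup {s : ℝ | ∃ T : Finset (Fin n), T.card = k ∧ s = ∑ i ∈ T, singularValues A i}

noncomputable def dualMatNorm {m n : ℕ} (N : Matrix (Fin m) (Fin n) ℝ → ℝ)
    (M : Matrix (Fin m) (Fin n) ℝ) : ℝ :=
  sSup {r : ℝ | ∃ D, N D ≤ 1 ∧ r = finner M D}

noncomputable def schatten {m n : ℕ} (p : ℝ) (A : Matrix (Fin m) (Fin n) ℝ) : ℝ :=
  (∑ i, singularValues A i ^ p) ^ (1 / p)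

/-!
Write `M = ∑ σᵢ uᵢ vᵢᵀ` and `D = ∑ τₗ u'ₗ v'ₗᵀ`. Then
`⟨M, D⟩ ≤ ∑ᵢₗ σᵢ Pᵢₗ τₗ` with `Pᵢₗ = |⟨uᵢ, u'ₗ⟩| |⟨vᵢ, v'ₗ⟩|`, and `P` is doubly substochastic by
Bessel's inequality and AM–GM. So the weights `ρₗ = ∑ᵢ σᵢ Pᵢₗ` satisfy `0 ≤ ρₗ ≤ ‖M‖_op ≤ c` and
`∑ ρₗ ≤ ‖M‖_nuc ≤ k c`, where `c = max (‖M‖_nuc / k) ‖M‖_op`; such weights pair with `τ` to at most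
`c` times the sum of the `k` largest `τₗ`, that is `c ‖D‖_{KF-k}`. The bound is attained by
`(1/k) ∑_{σᵢ ≠ 0} uᵢ vᵢᵀ`, whose singular values are `0` or `1/k`, or by the top singular pair
`u₁ v₁ᵀ`.
-/

open Finset

namespace KyFanDual

section TopSums

variable {ι κ : Type*} [Fintype ι] [Fintype κ]

theorem exists_card_eq_forall_le (τ : ι → ℝ) {k : ℕ} (hk : k ≤ Fintype.card ι) :
    ∃ T : Finset ι, T.card = k ∧ ∀ t ∈ T, ∀ i ∉ T, τ i ≤ τ t := by
  classical
  induction k with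
  | zero => exact ⟨∅, rfl, by simp⟩
  | succ k ih =>
    obtain ⟨T, hTk, htop⟩ := ih (by omega)
    have hne : Tᶜ.Nonempty := by
      rw [← card_pos, card_compl]
      omega
    obtain ⟨j, hjT, hjmax⟩ := Tᶜ.exists_max_image τ hne
    rw [mem_compl] at hjT
    refine ⟨insert j T, by rw [card_insert_of_notMem hjT, hTk], fun t ht i hi => ?_⟩
    rw [mem_insert, not_or] at hi
    rcases mem_insert.mp ht with rfl | ht
    · exact hjmax i (mem_compl.mpr hi.2)
    · exact htop t ht i hi.2

/-- With `μ = min_{t ∈ T} τ t`, each term obeys `w i (τ i - μ) ≤ c 1_T(i) (τ i - μ)`. -/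
theorem sum_mul_le_mul_sum_of_forall_le {τ w : ι → ℝ} {c : ℝ} {T : Finset ι} (hT : T.Nonempty)
    (htop : ∀ t ∈ T, ∀ i ∉ T, τ i ≤ τ t) (hτ : ∀ i, 0 ≤ τ i) (hw0 : ∀ i, 0 ≤ w i)
    (hwc : ∀ i, w i ≤ c) (hw : ∑ i, w i ≤ T.card * c) :
    ∑ i, w i * τ i ≤ c * ∑ i ∈ T, τ i := by
  classical
  obtain ⟨t, ht, hmin⟩ := T.exists_min_image τ hT
  have key : ∑ i, w i * (τ i - τ t) ≤ ∑ i, (if i ∈ T then c else 0) * (τ i - τ t) := by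
    refine sum_le_sum fun i _ => ?_
    split_ifs with hi
    · exact mul_le_mul_of_nonneg_right (hwc i) (sub_nonneg.mpr (hmin i hi))
    · simpa using mul_nonpos_of_nonneg_of_nonpos (hw0 i) (sub_nonpos.mpr (htop t ht i hi))
  simp only [mul_sub, ite_mul, zero_mul, sum_sub_distrib, sum_ite_mem, univ_inter,
    ← sum_mul, ← mul_sum, sum_const, nsmul_eq_mul] at key
  nlinarith [mul_le_mul_of_nonneg_right hw (hτ t)]

theorem sum_sum_mul_le_of_forall_le {σ : κ → ℝ} {P : κ → ι → ℝ} {τ : ι → ℝ} {c : ℝ}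
    {T : Finset ι} (hT : T.Nonempty) (htop : ∀ t ∈ T, ∀ i ∉ T, τ i ≤ τ t) (hτ : ∀ i, 0 ≤ τ i)
    (hc : 0 ≤ c) (hσ0 : ∀ a, 0 ≤ σ a) (hσc : ∀ a, σ a ≤ c) (hσ : ∑ a, σ a ≤ T.card * c)
    (hP0 : ∀ a i, 0 ≤ P a i) (hProw : ∀ a, ∑ i, P a i ≤ 1) (hPcol : ∀ i, ∑ a, P a i ≤ 1) :
    ∑ a, ∑ i, σ a * P a i * τ i ≤ c * ∑ i ∈ T, τ i := by
  rw [sum_comm]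
  simp_rw [← sum_mul]
  refine sum_mul_le_mul_sum_of_forall_le hT htop hτ
    (fun i => sum_nonneg fun a _ => mul_nonneg (hσ0 a) (hP0 a i)) (fun i => ?_) ?_
  · calc ∑ a, σ a * P a i ≤ ∑ a, c * P a i :=
          sum_le_sum fun a _ => mul_le_mul_of_nonneg_right (hσc a) (hP0 a i)
      _ ≤ c := by rw [← mul_sum]; exact mul_le_of_le_one_right hc (hPcol i)
  · calc ∑ i, ∑ a, σ a * P a i = ∑ a, σ a * ∑ i, P a i := by rw [sum_comm]; simp_rw [mul_sum]
      _ ≤ ∑ a, σ a := sum_le_sum fun a _ => mul_le_of_le_one_right (hσ0 a) (hProw a)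
      _ ≤ T.card * c := hσ

end TopSums

section SingularVectors

variable {m n : ℕ} (A : Matrix (Fin m) (Fin n) ℝ)

noncomputable def rightSingularVec (i : Fin n) : Fin n → ℝ :=
  ⇑((isHermitian_conjTranspose_mul_self A).eigenvectorBasis i)

/-- This is `0` when `singularValues A i = 0` (as `0⁻¹ = 0`), so sums over all `i` need no
restriction to the nonzero singular values. -/
noncomputable def leftSingularVec (i : Fin n) : Fin m → ℝ :=
  (singularValues A i)⁻¹ • (A *ᵥ rightSingularVec A i)

theorem singularValues_nonneg (i : Fin n) : 0 ≤ singularValues A i :=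
  Real.sqrt_nonneg _

theorem sq_singularValues (i : Fin n) :
    singularValues A i ^ 2 = (isHermitian_conjTranspose_mul_self A).eigenvalues i :=
  Real.sq_sqrt (eigenvalues_conjTranspose_mul_self_nonneg A i)

theorem sum_sq_singularValues : ∑ i, singularValues A i ^ 2 = (Aᴴ * A).trace := by
  rw [(isHermitian_conjTranspose_mul_self A).trace_eq_sum_eigenvalues]
  simp only [sq_singularValues, RCLike.ofReal_real_eq_id, id]

theorem rightSingularVec_dotProduct (i j : Fin n) :
    rightSingularVec A i ⬝ᵥ rightSingularVec A j = if i = j then 1 else 0 := by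
  simpa [rightSingularVec, EuclideanSpace.inner_eq_star_dotProduct, dotProduct_comm] using
    orthonormal_iff_ite.mp (isHermitian_conjTranspose_mul_self A).eigenvectorBasis.orthonormal i j

theorem sum_vecMulVec_rightSingularVec :
    ∑ i, vecMulVec (rightSingularVec A i) (rightSingularVec A i) = 1 := by
  ext a b
  simpa [Matrix.mul_apply, Matrix.sum_apply, vecMulVec_apply, rightSingularVec] using
    congrFun₂ (Unitary.coe_mul_star_self
      (isHermitian_conjTranspose_mul_self A).eigenvectorUnitary) a b

theorem conjTranspose_mul_self_mulVec_rightSingularVec (i : Fin n) :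
    (Aᴴ * A) *ᵥ rightSingularVec A i = singularValues A i ^ 2 • rightSingularVec A i := by
  rw [sq_singularValues]
  exact (isHermitian_conjTranspose_mul_self A).mulVec_eigenvectorBasis i

theorem mulVec_rightSingularVec_dotProduct (i j : Fin n) :
    (A *ᵥ rightSingularVec A i) ⬝ᵥ (A *ᵥ rightSingularVec A j) =
      if i = j then singularValues A i ^ 2 else 0 := by
  rw [dotProduct_mulVec, ← mulVec_transpose, mulVec_mulVec, ← conjTranspose_eq_transpose_of_trivial,
    conjTranspose_mul_self_mulVec_rightSingularVec, smul_dotProduct, rightSingularVec_dotProduct,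
    smul_eq_mul, mul_ite, mul_one, mul_zero]

theorem mulVec_rightSingularVec (i : Fin n) :
    A *ᵥ rightSingularVec A i = singularValues A i • leftSingularVec A i := by
  rcases eq_or_ne (singularValues A i) 0 with h | h
  · have hself := mulVec_rightSingularVec_dotProduct A i i
    rw [if_pos rfl, h, sq, mul_zero, dotProduct_self_eq_zero] at hself
    rw [hself, h, zero_smul]
  · rw [leftSingularVec, smul_smul, mul_inv_cancel₀ h, one_smul]

theorem leftSingularVec_dotProduct {i : Fin n} (hi : singularValues A i ≠ 0) (j : Fin n) :
    leftSingularVec A i ⬝ᵥ leftSingularVec A j = if i = j then 1 else 0 := by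
  rw [leftSingularVec, leftSingularVec, smul_dotProduct, dotProduct_smul,
    mulVec_rightSingularVec_dotProduct]
  split_ifs with hij
  · subst hij
    rw [smul_eq_mul, smul_eq_mul]
    field_simp
  · simp

theorem leftSingularVec_eq_zero {i : Fin n} (h : singularValues A i = 0) :
    leftSingularVec A i = 0 := by
  simp [leftSingularVec, h]

theorem singularValues_mul_leftSingularVec_dotProduct_self (i : Fin n) :
    singularValues A i * (leftSingularVec A i ⬝ᵥ leftSingularVec A i) = singularValues A i := by
  rcases eq_or_ne (singularValues A i) 0 with h | h
  · rw [h, zero_mul]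
  · rw [leftSingularVec_dotProduct A h, if_pos rfl, mul_one]

theorem leftSingularVec_dotProduct_self_le_one (i : Fin n) :
    leftSingularVec A i ⬝ᵥ leftSingularVec A i ≤ 1 := by
  rcases eq_or_ne (singularValues A i) 0 with h | h
  · simp [leftSingularVec_eq_zero A h]
  · rw [leftSingularVec_dotProduct A h, if_pos rfl]

theorem eq_sum_smul_vecMulVec_singularVec :
    A = ∑ i, singularValues A i • vecMulVec (leftSingularVec A i) (rightSingularVec A i) := by
  conv_lhs => rw [← Matrix.mul_one A, ← sum_vecMulVec_rightSingularVec A, Matrix.mul_sum]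
  simp only [mul_vecMulVec, mulVec_rightSingularVec, smul_vecMulVec]

theorem mulVec_eq_sum_singularVec (x : Fin n → ℝ) :
    A *ᵥ x = ∑ i, (singularValues A i * (rightSingularVec A i ⬝ᵥ x)) • leftSingularVec A i := by
  conv_lhs => rw [eq_sum_smul_vecMulVec_singularVec A]
  simp only [sum_mulVec, smul_mulVec, vecMulVec_mulVec, op_smul_eq_smul, smul_smul]

end SingularVectors

section Bessel

theorem sum_sq_dotProduct_le {ι κ : Type*} [Fintype κ] [DecidableEq ι] (s : Finset ι)
    {w : ι → κ → ℝ} (hw : ∀ i ∈ s, ∀ j ∈ s, w i ⬝ᵥ w j = if i = j then 1 else 0) (x : κ → ℝ) :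
    ∑ i ∈ s, (w i ⬝ᵥ x) ^ 2 ≤ x ⬝ᵥ x := by
  have hon : Orthonormal ℝ fun i : s => WithLp.toLp 2 (w i) := by
    rw [orthonormal_iff_ite]
    rintro ⟨i, hi⟩ ⟨j, hj⟩
    simpa [EuclideanSpace.inner_toLp_toLp, dotProduct_comm, Subtype.ext_iff] using hw i hi j hj
  have hbessel := hon.sum_inner_products_le (WithLp.toLp 2 x) (s := univ)
  rw [← real_inner_self_eq_norm_sq, EuclideanSpace.inner_toLp_toLp] at hbessel
  simpa [EuclideanSpace.inner_toLp_toLp, dotProduct_comm, sum_attach s (fun i => (x ⬝ᵥ w i) ^ 2)]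
    using hbessel

variable {m n : ℕ}

theorem sum_sq_leftSingularVec_dotProduct_le (A : Matrix (Fin m) (Fin n) ℝ) (x : Fin m → ℝ) :
    ∑ i, (leftSingularVec A i ⬝ᵥ x) ^ 2 ≤ x ⬝ᵥ x := by
  rw [← sum_filter_of_ne (p := fun i => singularValues A i ≠ 0)]
  · exact sum_sq_dotProduct_le _
      (fun i hi j _ => leftSingularVec_dotProduct A (mem_filter.mp hi).2 j) x
  · intro i _ hne h
    simp [leftSingularVec_eq_zero A h] at hne

theorem sum_sq_rightSingularVec_dotProduct_le (A : Matrix (Fin m) (Fin n) ℝ) (x : Fin n → ℝ) :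
    ∑ i, (rightSingularVec A i ⬝ᵥ x) ^ 2 ≤ x ⬝ᵥ x :=
  sum_sq_dotProduct_le _ (fun i _ j _ => rightSingularVec_dotProduct A i j) x

theorem sum_abs_dotProduct_mul_abs_dotProduct_le_one (A B : Matrix (Fin m) (Fin n) ℝ) (l : Fin n) :
    ∑ i, |leftSingularVec A i ⬝ᵥ leftSingularVec B l| *
      |rightSingularVec A i ⬝ᵥ rightSingularVec B l| ≤ 1 := by
  have hu := (sum_sq_leftSingularVec_dotProduct_le A (leftSingularVec B l)).trans
    (leftSingularVec_dotProduct_self_le_one B l)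
  have hv := sum_sq_rightSingularVec_dotProduct_le A (rightSingularVec B l)
  rw [rightSingularVec_dotProduct, if_pos rfl] at hv
  calc _ ≤ ∑ i, ((leftSingularVec A i ⬝ᵥ leftSingularVec B l) ^ 2 +
          (rightSingularVec A i ⬝ᵥ rightSingularVec B l) ^ 2) / 2 :=
        sum_le_sum fun i _ => by
          rw [← sq_abs (leftSingularVec A i ⬝ᵥ _), ← sq_abs (rightSingularVec A i ⬝ᵥ _)]
          linarith [two_mul_le_add_sq |leftSingularVec A i ⬝ᵥ leftSingularVec B l|
            |rightSingularVec A i ⬝ᵥ rightSingularVec B l|]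
    _ ≤ 1 := by rw [← sum_div, sum_add_distrib]; linarith

end Bessel

section Finner

variable {m n : ℕ}

theorem finner_vecMulVec (A : Matrix (Fin m) (Fin n) ℝ) (x : Fin m → ℝ) (y : Fin n → ℝ) :
    finner A (vecMulVec x y) = x ⬝ᵥ (A *ᵥ y) := by
  simp only [finner, vecMulVec_apply, dotProduct, mulVec, mul_sum]
  exact sum_congr rfl fun a _ => sum_congr rfl fun b _ => by ring

theorem finner_smul_right (A D : Matrix (Fin m) (Fin n) ℝ) (c : ℝ) :
    finner A (c • D) = c * finner A D := by
  simp only [finner, Matrix.smul_apply, smul_eq_mul, mul_sum]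
  exact sum_congr rfl fun a _ => sum_congr rfl fun b _ => by ring

theorem finner_sum_right {ι : Type*} (A : Matrix (Fin m) (Fin n) ℝ) (s : Finset ι)
    (D : ι → Matrix (Fin m) (Fin n) ℝ) : finner A (∑ i ∈ s, D i) = ∑ i ∈ s, finner A (D i) := by
  simp only [finner, Matrix.sum_apply, mul_sum]
  exact (sum_congr rfl fun a _ => sum_comm).trans sum_comm

theorem finner_eq_sum_singularVec (M D : Matrix (Fin m) (Fin n) ℝ) :
    finner M D = ∑ i, ∑ l, singularValues M i *
      ((leftSingularVec M i ⬝ᵥ leftSingularVec D l) *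
        (rightSingularVec M i ⬝ᵥ rightSingularVec D l)) * singularValues D l := by
  conv_lhs => rw [eq_sum_smul_vecMulVec_singularVec D]
  simp only [finner_sum_right, finner_smul_right, finner_vecMulVec, mulVec_eq_sum_singularVec M,
    dotProduct_sum, dotProduct_smul, smul_eq_mul, mul_sum]
  rw [sum_comm]
  exact sum_congr rfl fun i _ => sum_congr rfl fun l _ => by
    rw [dotProduct_comm (leftSingularVec D l)]
    ring

end Finner

section KyFan

variable {m n : ℕ} (A : Matrix (Fin m) (Fin n) ℝ) {k : ℕ}

theorem sum_le_kyFan {T : Finset (Fin n)} (hT : T.card = k) :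
    ∑ i ∈ T, singularValues A i ≤ kyFan k A := by
  refine le_csSup ?_ ⟨T, hT, rfl⟩
  refine (Set.finite_range fun T : Finset (Fin n) => ∑ i ∈ T, singularValues A i).bddAbove.mono ?_
  rintro _ ⟨T, -, rfl⟩
  exact ⟨T, rfl⟩

theorem kyFan_le_of_forall (hk : k ≤ n) {c : ℝ}
    (h : ∀ T : Finset (Fin n), T.card = k → ∑ i ∈ T, singularValues A i ≤ c) :
    kyFan k A ≤ c := by
  obtain ⟨T, -, hT⟩ := (univ : Finset (Fin n)).exists_subset_card_eq (by simpa using hk)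
  refine csSup_le ⟨_, T, hT, rfl⟩ ?_
  rintro _ ⟨T, hT, rfl⟩
  exact h T hT

theorem kyFan_le_nuclearNorm (hk : k ≤ n) : kyFan k A ≤ nuclearNorm A :=
  kyFan_le_of_forall A hk fun _ _ => sum_le_univ_sum_of_nonneg (singularValues_nonneg A)

theorem kyFan_le_mul_of_forall_le (hk : k ≤ n) {c : ℝ} (h : ∀ i, singularValues A i ≤ c) :
    kyFan k A ≤ k * c :=
  kyFan_le_of_forall A hk fun T hT => by
    simpa [hT] using sum_le_card_nsmul T _ c fun i _ => h i

end KyFan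

section NuclearNormOpNorm

variable {m n : ℕ} (A : Matrix (Fin m) (Fin n) ℝ)

theorem nuclearNorm_nonneg : 0 ≤ nuclearNorm A :=
  sum_nonneg fun i _ => singularValues_nonneg A i

theorem max_nuclearNorm_opNorm_nonneg (k : ℕ) :
    0 ≤ max (1 / (k : ℝ) * nuclearNorm A) (opNorm A) :=
  le_max_of_le_left (mul_nonneg (by positivity) (nuclearNorm_nonneg A))

theorem singularValues_le_opNorm (i : Fin n) : singularValues A i ≤ opNorm A :=
  le_csSup (Set.finite_range _).bddAbove ⟨i, rfl⟩

theorem exists_singularValues_eq_opNorm [NeZero n] : ∃ i, singularValues A i = opNorm A :=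
  (Set.range_nonempty _).csSup_mem (Set.finite_range _)

end NuclearNormOpNorm

theorem finner_le_mul_kyFan {m n k : ℕ} (M D : Matrix (Fin m) (Fin n) ℝ) (hk1 : 1 ≤ k)
    (hkn : k ≤ n) : finner M D ≤ max (1 / (k : ℝ) * nuclearNorm M) (opNorm M) * kyFan k D := by
  set c := max (1 / (k : ℝ) * nuclearNorm M) (opNorm M)
  have hc : 0 ≤ c := max_nuclearNorm_opNorm_nonneg M k
  obtain ⟨T, hTk, htop⟩ := exists_card_eq_forall_le (singularValues D) (k := k) (by simpa using hkn)
  have hnuc : ∑ i, singularValues M i ≤ T.card * c := by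
    have hk : (0 : ℝ) < k := by exact_mod_cast hk1
    calc ∑ i, singularValues M i = k * (1 / (k : ℝ) * nuclearNorm M) := by
          rw [nuclearNorm]; field_simp
      _ ≤ T.card * c := by rw [hTk]; exact mul_le_mul_of_nonneg_left (le_max_left _ _) hk.le
  calc finner M D
      ≤ ∑ i, ∑ l, singularValues M i * (|leftSingularVec M i ⬝ᵥ leftSingularVec D l| *
          |rightSingularVec M i ⬝ᵥ rightSingularVec D l|) * singularValues D l := by
        rw [finner_eq_sum_singularVec]
        refine sum_le_sum fun i _ => sum_le_sum fun l _ => ?_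
        refine mul_le_mul_of_nonneg_right (mul_le_mul_of_nonneg_left ?_
          (singularValues_nonneg M i)) (singularValues_nonneg D l)
        rw [← abs_mul]
        exact le_abs_self _
    _ ≤ c * ∑ l ∈ T, singularValues D l :=
        sum_sum_mul_le_of_forall_le (card_pos.mp (by omega)) htop (singularValues_nonneg D) hc
          (singularValues_nonneg M)
          (fun i => (singularValues_le_opNorm M i).trans (le_max_right _ _))
          hnuc (fun _ _ => by positivity)
          (fun i => by simpa only [dotProduct_comm] using
            sum_abs_dotProduct_mul_abs_dotProduct_le_one D M i)
          (sum_abs_dotProduct_mul_abs_dotProduct_le_one M D)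
    _ ≤ c * kyFan k D := mul_le_mul_of_nonneg_left (sum_le_kyFan D hTk) hc

section PartialIsometry

theorem sum_vecMulVec_mul_sum_vecMulVec {ι α β γ : Type*} [Fintype β] [DecidableEq ι]
    (s : Finset ι) (a : ι → α → ℝ) {b : ι → β → ℝ} (c : ι → γ → ℝ)
    (hb : ∀ i ∈ s, ∀ j ∈ s, b i ⬝ᵥ b j = if i = j then 1 else 0) :
    (∑ i ∈ s, vecMulVec (a i) (b i)) * (∑ j ∈ s, vecMulVec (b j) (c j)) =
      ∑ i ∈ s, vecMulVec (a i) (c i) := by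
  rw [Matrix.sum_mul]
  refine sum_congr rfl fun i hi => ?_
  rw [Matrix.mul_sum]
  simp_rw [vecMulVec_mul_vecMulVec, vecMulVec_smul]
  rw [sum_congr rfl fun j hj => congrArg (· • _) (hb i hi j hj)]
  simp only [ite_smul, one_smul, zero_smul, sum_ite_eq, if_pos hi]

variable {m n : ℕ}

theorem sq_singularValues_eq_zero_or_eq (A : Matrix (Fin m) (Fin n) ℝ) {a : ℝ}
    (h : (Aᴴ * A) * (Aᴴ * A) = a • (Aᴴ * A)) (i : Fin n) :
    singularValues A i ^ 2 = 0 ∨ singularValues A i ^ 2 = a := by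
  have hv : rightSingularVec A i ≠ 0 := fun h0 => by
    simpa [h0] using rightSingularVec_dotProduct A i i
  have hBv : (Aᴴ * A) *ᵥ ((Aᴴ * A) *ᵥ rightSingularVec A i) =
      a • ((Aᴴ * A) *ᵥ rightSingularVec A i) := by
    rw [mulVec_mulVec, h, smul_mulVec]
  simp only [conjTranspose_mul_self_mulVec_rightSingularVec, mulVec_smul, smul_smul] at hBv
  have hsq := smul_left_injective ℝ hv hBv
  rcases mul_eq_zero.mp (by linear_combination hsq :
      singularValues A i ^ 2 * (singularValues A i ^ 2 - a) = 0) with h0 | h0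
  · exact Or.inl h0
  · exact Or.inr (sub_eq_zero.mp h0)

variable {ι : Type*} [DecidableEq ι] {s : Finset ι} {x : ι → Fin m → ℝ} {y : ι → Fin n → ℝ}
  (hx : ∀ i ∈ s, ∀ j ∈ s, x i ⬝ᵥ x j = if i = j then 1 else 0)
  (hy : ∀ i ∈ s, ∀ j ∈ s, y i ⬝ᵥ y j = if i = j then 1 else 0)
include hx

theorem conjTranspose_mul_self_sum_vecMulVec :
    (∑ i ∈ s, vecMulVec (x i) (y i))ᴴ * (∑ i ∈ s, vecMulVec (x i) (y i)) =
      ∑ i ∈ s, vecMulVec (y i) (y i) := by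
  simp only [conjTranspose_sum, conjTranspose_vecMulVec, star_trivial]
  exact sum_vecMulVec_mul_sum_vecMulVec s y y hx

include hy

theorem sq_singularValues_smul_sum_vecMulVec (c : ℝ) (l : Fin n) :
    singularValues (c • ∑ i ∈ s, vecMulVec (x i) (y i)) l ^ 2 = 0 ∨
      singularValues (c • ∑ i ∈ s, vecMulVec (x i) (y i)) l ^ 2 = c ^ 2 := by
  refine sq_singularValues_eq_zero_or_eq _ ?_ l
  have hP := sum_vecMulVec_mul_sum_vecMulVec s y y hy
  simp only [conjTranspose_smul, star_trivial, Matrix.smul_mul, Matrix.mul_smul, smul_smul,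
    conjTranspose_mul_self_sum_vecMulVec hx, hP, sq]

theorem singularValues_smul_sum_vecMulVec_le {c : ℝ} (hc : 0 ≤ c) (l : Fin n) :
    singularValues (c • ∑ i ∈ s, vecMulVec (x i) (y i)) l ≤ c := by
  have h0 := singularValues_nonneg (c • ∑ i ∈ s, vecMulVec (x i) (y i)) l
  rcases sq_singularValues_smul_sum_vecMulVec hx hy c l with h | h <;> nlinarith

theorem nuclearNorm_sum_vecMulVec : nuclearNorm (∑ i ∈ s, vecMulVec (x i) (y i)) = s.card := by
  have hσ (l : Fin n) : singularValues (∑ i ∈ s, vecMulVec (x i) (y i)) l =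
      singularValues (∑ i ∈ s, vecMulVec (x i) (y i)) l ^ 2 := by
    have h0 := singularValues_nonneg (∑ i ∈ s, vecMulVec (x i) (y i)) l
    rcases one_smul ℝ (∑ i ∈ s, vecMulVec (x i) (y i)) ▸
      sq_singularValues_smul_sum_vecMulVec hx hy 1 l with h | h <;> nlinarith
  rw [nuclearNorm, sum_congr rfl fun l _ => hσ l, sum_sq_singularValues,
    conjTranspose_mul_self_sum_vecMulVec hx, trace_sum,
    sum_congr rfl fun i hi => by rw [trace_vecMulVec, hy i hi i hi, if_pos rfl]]
  simp

end PartialIsometry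

theorem finner_sum_vecMulVec_singularVec {m n : ℕ} (M : Matrix (Fin m) (Fin n) ℝ)
    (s : Finset (Fin n)) :
    finner M (∑ i ∈ s, vecMulVec (leftSingularVec M i) (rightSingularVec M i)) =
      ∑ i ∈ s, singularValues M i := by
  rw [finner_sum_right]
  refine sum_congr rfl fun i _ => ?_
  rw [finner_vecMulVec, mulVec_rightSingularVec, dotProduct_smul, smul_eq_mul]
  exact singularValues_mul_leftSingularVec_dotProduct_self M i

theorem exists_kyFan_le_one_finner_eq {m n k : ℕ} (M : Matrix (Fin m) (Fin n) ℝ) (hk1 : 1 ≤ k)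
    (hkn : k ≤ n) : ∃ D, kyFan k D ≤ 1 ∧
      finner M D = max (1 / (k : ℝ) * nuclearNorm M) (opNorm M) := by
  have hu {s : Finset (Fin n)} (hs : ∀ i ∈ s, singularValues M i ≠ 0) :
      ∀ i ∈ s, ∀ j ∈ s, leftSingularVec M i ⬝ᵥ leftSingularVec M j = if i = j then 1 else 0 :=
    fun i hi j _ => leftSingularVec_dotProduct M (hs i hi) j
  have hv {s : Finset (Fin n)} :
      ∀ i ∈ s, ∀ j ∈ s, rightSingularVec M i ⬝ᵥ rightSingularVec M j = if i = j then 1 else 0 :=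
    fun i _ j _ => rightSingularVec_dotProduct M i j
  rcases le_or_gt (opNorm M) (1 / (k : ℝ) * nuclearNorm M) with h | h
  · have hs : ∀ i ∈ univ.filter (singularValues M · ≠ 0), singularValues M i ≠ 0 :=
      fun i hi => (mem_filter.mp hi).2
    refine ⟨(1 / (k : ℝ)) • ∑ i ∈ univ.filter (singularValues M · ≠ 0),
      vecMulVec (leftSingularVec M i) (rightSingularVec M i), ?_, ?_⟩
    · calc _ ≤ k * (1 / (k : ℝ)) := kyFan_le_mul_of_forall_le _ hkn
            (singularValues_smul_sum_vecMulVec_le (hu hs) hv (by positivity))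
        _ = 1 := by field_simp
    · rw [max_eq_left h, finner_smul_right, finner_sum_vecMulVec_singularVec, sum_filter_ne_zero,
        nuclearNorm]
  · have : NeZero n := ⟨by omega⟩
    obtain ⟨j, hj⟩ := exists_singularValues_eq_opNorm M
    have hs : ∀ i ∈ ({j} : Finset (Fin n)), singularValues M i ≠ 0 := fun i hi => by
      rw [mem_singleton.mp hi, hj]
      exact ((mul_nonneg (by positivity) (nuclearNorm_nonneg M)).trans_lt h).ne'
    refine ⟨∑ i ∈ {j}, vecMulVec (leftSingularVec M i) (rightSingularVec M i), ?_, ?_⟩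
    · refine (kyFan_le_nuclearNorm _ hkn).trans ?_
      rw [nuclearNorm_sum_vecMulVec (hu hs) hv, card_singleton, Nat.cast_one]
    · rw [max_eq_right h.le, finner_sum_vecMulVec_singularVec, sum_singleton, hj]

end KyFanDual

/-- The dual of the Ky Fan k-norm is max{(1/k)·nuclear norm, operator norm}. -/
theorem stmt6 {m n : ℕ} (M : Matrix (Fin m) (Fin n) ℝ) (k : ℕ)
    (hk1 : 1 ≤ k) (hk : k ≤ min m n) :
    dualMatNorm (kyFan k) M = max ((1 / (k : ℝ)) * nuclearNorm M) (opNorm M) := by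
  have hkn : k ≤ n := hk.trans (min_le_right m n)
  refine IsGreatest.csSup_eq ⟨?_, ?_⟩
  · obtain ⟨D, hD, hMD⟩ := KyFanDual.exists_kyFan_le_one_finner_eq M hk1 hkn
    exact ⟨D, hD, hMD.symm⟩
  · rintro _ ⟨D, hD, rfl⟩
    exact (KyFanDual.finner_le_mul_kyFan M D hk1 hkn).trans
      (mul_le_of_le_one_right (KyFanDual.max_nuclearNorm_opNorm_nonneg M k) hD)
end
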